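/- arXiv:2504.15915 — 3 statements merged into one kernel-verified Lean document; each statement's English description precedes it below -/
import Mathlib

section
/- Let (X, {d_r}) satisfy the weaker d_r-axioms and suppose in addition that each d_r is symmetric: d_r(x,y) = d_r(y,x) for all r > 0 and x, y ∈ X. Then there exists a uniform space structure on X whose uniformity filter is generated by the sets U_{r,ε} (r > 0, ε > 0); equivalently, the filter generated by {U_{r,ε}} satisfies: every member contains the diagonal; the inverse U⁻¹ = {(y,x) | (x,y) ∈ U} of every member is a member; and every member U admits a member V with V ∘ V ⊆ U. -/
open ENNReal

/-- The weaker `d_r`-axioms for a family of metric-like functions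
`d : ℝ → X → X → ℝ≥0∞` indexed by `r > 0`. -/
structure WeakerDr {X : Type*} (d : ℝ → X → X → ℝ≥0∞) : Prop where
  self : ∀ (x : X) (r : ℝ), 0 < r → d r x x = 0
  mono : ∀ (x y : X) (r₁ r₂ : ℝ), 0 < r₁ → r₁ ≤ r₂ → d r₁ x y ≤ d r₂ x y
  usc : ∀ (x y : X) (r ε : ℝ), 0 < r → 0 < ε → d r x y < ENNReal.ofReal ε →
    ∃ δ : ℝ, 0 < δ ∧ d (r + δ) x y < ENNReal.ofReal ε
  weaker_tri : ∀ (x y z : X) (r₁ r₂ r₃ : ℝ), 0 < r₁ → 0 < r₂ → 0 < r₃ →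
    d (r₁ + r₂ + r₃) x y < ENNReal.ofReal r₃ → d (r₁ + r₂ + r₃) y z < ENNReal.ofReal r₂ →
    d r₁ x z ≤ d (r₁ + r₂ + r₃) x y + d (r₁ + r₂ + r₃) y z

/-- The basic entourage `U_{r,ε} = {(x,y) | d_r(x,y) < ε}`. -/
def entourageDr {X : Type*} (d : ℝ → X → X → ℝ≥0∞) (r ε : ℝ) : Set (X × X) :=
  {p | d r p.1 p.2 < ENNReal.ofReal ε}

/-!
The sets `U_{r,ε}` form a filter basis because `U_{r,ε}` shrinks as `r` grows and `ε` decreases,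
so `U_{max r r', min ε ε'}` lies in `U_{r,ε} ∩ U_{r',ε'}`. Each `U_{r,ε}` contains the diagonal by
`d_r(x,x) = 0`, is invariant under swapping by symmetry, and the weaker triangle inequality with
`r₁ = r`, `r₂ = r₃ = ε/2` gives `U_{r+ε,ε/2} ○ U_{r+ε,ε/2} ⊆ U_{r,ε}`.
-/

open SetRel

namespace WeakerDr

variable {X : Type*} {d : ℝ → X → X → ℝ≥0∞}

theorem entourageDr_subset_entourageDr (h : WeakerDr d) {r r' ε ε' : ℝ} (hr : 0 < r)
    (hrr' : r ≤ r') (hε'ε : ε' ≤ ε) : entourageDr d r' ε' ⊆ entourageDr d r ε :=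
  fun p hp => (h.mono p.1 p.2 r r' hr hrr').trans_lt
    (hp.trans_le (ENNReal.ofReal_le_ofReal hε'ε))

theorem mk_self_mem_entourageDr (h : WeakerDr d) {r ε : ℝ} (hr : 0 < r) (hε : 0 < ε) (x : X) :
    (x, x) ∈ entourageDr d r ε := by
  simpa [entourageDr, h.self x r hr] using hε

theorem entourageDr_comp_subset (h : WeakerDr d) {r ε : ℝ} (hr : 0 < r) (hε : 0 < ε) :
    entourageDr d (r + ε) (ε / 2) ○ entourageDr d (r + ε) (ε / 2) ⊆ entourageDr d r ε := by
  rintro ⟨x, z⟩ ⟨y, hxy, hyz⟩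
  have hr' : r + ε / 2 + ε / 2 = r + ε := by ring
  simp only [entourageDr, Set.mem_ofPred_eq, ← hr'] at hxy hyz ⊢
  calc d r x z ≤ d (r + ε / 2 + ε / 2) x y + d (r + ε / 2 + ε / 2) y z :=
        h.weaker_tri x y z r (ε / 2) (ε / 2) hr (half_pos hε) (half_pos hε) hxy hyz
    _ < ENNReal.ofReal (ε / 2) + ENNReal.ofReal (ε / 2) := ENNReal.add_lt_add hxy hyz
    _ = ENNReal.ofReal ε := by
      rw [← ENNReal.ofReal_add (half_pos hε).le (half_pos hε).le, add_halves]

theorem swap_preimage_entourageDr {r ε : ℝ} (hsymm : ∀ x y, d r x y = d r y x) :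
    Prod.swap ⁻¹' entourageDr d r ε = entourageDr d r ε := by
  ext ⟨x, y⟩
  simp only [Set.mem_preimage, Prod.swap_prod_mk, entourageDr, Set.mem_ofPred_eq, hsymm y x]

def entourageBasis (h : WeakerDr d) : FilterBasis (X × X) where
  sets := {U | ∃ r ε : ℝ, 0 < r ∧ 0 < ε ∧ U = entourageDr d r ε}
  nonempty := ⟨_, 1, 1, one_pos, one_pos, rfl⟩
  inter_sets := by
    rintro _ _ ⟨r, ε, hr, hε, rfl⟩ ⟨r', ε', hr', hε', rfl⟩
    exact ⟨entourageDr d (max r r') (min ε ε'), ⟨_, _, hr.trans_le (le_max_left _ _),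
        lt_min hε hε', rfl⟩,
      Set.subset_inter (h.entourageDr_subset_entourageDr hr (le_max_left _ _) (min_le_left _ _))
        (h.entourageDr_subset_entourageDr hr' (le_max_right _ _) (min_le_right _ _))⟩

def uniformSpaceCore (h : WeakerDr d) (hsymm : ∀ r, 0 < r → ∀ x y, d r x y = d r y x) :
    UniformSpace.Core X :=
  .mkOfBasis h.entourageBasis
    (by rintro _ ⟨r, ε, hr, hε, rfl⟩ x; exact h.mk_self_mem_entourageDr hr hε x)
    (by
      rintro _ ⟨r, ε, hr, hε, rfl⟩
      exact ⟨_, ⟨r, ε, hr, hε, rfl⟩, (swap_preimage_entourageDr (hsymm r hr)).ge⟩)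
    (by
      rintro _ ⟨r, ε, hr, hε, rfl⟩
      exact ⟨_, ⟨r + ε, ε / 2, by positivity, half_pos hε, rfl⟩, h.entourageDr_comp_subset hr hε⟩)

end WeakerDr

theorem stmt_10 {X : Type*} (d : ℝ → X → X → ℝ≥0∞) (h : WeakerDr d)
    (hsymm : ∀ (r : ℝ), 0 < r → ∀ x y : X, d r x y = d r y x) :
    ∃ u : UniformSpace X,
      @uniformity X u =
        Filter.generate {U : Set (X × X) | ∃ r ε : ℝ, 0 < r ∧ 0 < ε ∧
          U = entourageDr d r ε} :=
  ⟨.ofCore (h.uniformSpaceCore hsymm), h.entourageBasis.generate.symm⟩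
end

section
/- Let 𝒫 be a finite set of subsets of ℝ^d, each having nonempty interior, and let λ > 0 be such that for every tiling S of ℝ^d with prototile set 𝒫, every nonempty K ⊆ ℝ^d, and all u, v ∈ ℝ^d with |u| < λ and |v| < λ, (S+u) ⊓ K = (S+v) ⊓ K implies u = v. Then for every tiling S of ℝ^d with prototile set 𝒫, every r > 0, and all x, y ∈ ℝ^d with |x − y| < λ, one has d_r(S+x, S+y) = |x − y|. -/
open ENNReal

noncomputable section

/-- Translation of a tiling: `T + u = {t + u | t ∈ T}`. -/
def transTiling {d : ℕ} (T : Set (Set (EuclideanSpace ℝ (Fin d))))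
    (u : EuclideanSpace ℝ (Fin d)) : Set (Set (EuclideanSpace ℝ (Fin d))) :=
  (fun s => (fun p => p + u) '' s) '' T

/-- `T ⊓ A = {t ∈ T | t ∩ A ≠ ∅}`, the tiles of `T` meeting `A`. -/
def meetsTiles {d : ℕ} (T : Set (Set (EuclideanSpace ℝ (Fin d))))
    (A : Set (EuclideanSpace ℝ (Fin d))) : Set (Set (EuclideanSpace ℝ (Fin d))) :=
  {t ∈ T | (t ∩ A).Nonempty}

/-- `T` is a tiling of `ℝ^d` with prototile set `P`. -/
def IsTiling {d : ℕ} (P : Set (Set (EuclideanSpace ℝ (Fin d))))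
    (T : Set (Set (EuclideanSpace ℝ (Fin d)))) : Prop :=
  (∀ t ∈ T, ∃ τ ∈ P, ∃ x : EuclideanSpace ℝ (Fin d), t = (fun p => p + x) '' τ) ∧
  (∀ t ∈ T, Nonempty
    (t ≃ₜ (Metric.closedBall (0 : EuclideanSpace ℝ (Fin d)) 1 : Set (EuclideanSpace ℝ (Fin d))))) ∧
  (⋃₀ T = Set.univ) ∧
  (∀ t₁ ∈ T, ∀ t₂ ∈ T, t₁ ≠ t₂ → interior t₁ ∩ interior t₂ = ∅)

/-- `d_r(T₁,T₂)`: the infimum of all `ε > 0` such that some `u` with `‖u‖ < ε` satisfies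
`(T₁+u) ⊓ B̄_r = T₂ ⊓ B̄_r`, taken in `[0,∞]` (so `= ∞` if there is no such `ε`). -/
def tilingDr {d : ℕ} (r : ℝ) (T₁ T₂ : Set (Set (EuclideanSpace ℝ (Fin d)))) : ℝ≥0∞ :=
  ⨅ (ε : ℝ) (_ : 0 < ε ∧ ∃ u : EuclideanSpace ℝ (Fin d), ‖u‖ < ε ∧
      meetsTiles (transTiling T₁ u) (Metric.closedBall 0 r)
        = meetsTiles T₂ (Metric.closedBall 0 r)),
    ENNReal.ofReal ε

lemma transTiling_transTiling {d : ℕ} (S : Set (Set (EuclideanSpace ℝ (Fin d))))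
    (a b : EuclideanSpace ℝ (Fin d)) :
    transTiling (transTiling S a) b = transTiling S (a + b) := by
  unfold transTiling
  rw [← Set.image_comp]
  congr 1
  funext s
  simp only [Function.comp_apply, ← Set.image_comp]
  congr 1
  funext p
  simp [add_assoc]

lemma isTiling_trans {d : ℕ} {P S : Set (Set (EuclideanSpace ℝ (Fin d)))} (hS : IsTiling P S)
    (a : EuclideanSpace ℝ (Fin d)) : IsTiling P (transTiling S a) := by
  obtain ⟨h1, h2, h3, h4⟩ := hS
  refine ⟨?_, ?_, ?_, ?_⟩
  · rintro t ⟨s, hs, rfl⟩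
    obtain ⟨τ, hτ, x, rfl⟩ := h1 s hs
    refine ⟨τ, hτ, x + a, ?_⟩
    dsimp only
    rw [← Set.image_comp]
    congr 1
    funext p
    simp [add_assoc]
  · rintro t ⟨s, hs, rfl⟩
    obtain ⟨e⟩ := h2 s hs
    exact ⟨((Homeomorph.addRight a).image s).symm.trans e⟩
  · ext p
    simp only [Set.mem_univ, iff_true]
    have hp : p - a ∈ ⋃₀ S := by rw [h3]; trivial
    obtain ⟨s, hs, hps⟩ := hp
    exact ⟨(fun q => q + a) '' s, ⟨s, hs, rfl⟩, p - a, hps, by simp⟩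
  · rintro t₁ ⟨s₁, hs₁, rfl⟩ t₂ ⟨s₂, hs₂, rfl⟩ hne
    have hinj : Function.Injective (fun p : EuclideanSpace ℝ (Fin d) => p + a) :=
      fun p q h => by simpa using congrArg (fun z => z - a) h
    have hne' : s₁ ≠ s₂ := fun h => hne (by rw [h])
    have him : ∀ s : Set (EuclideanSpace ℝ (Fin d)),
        interior ((fun p => p + a) '' s) = (fun p => p + a) '' interior s := fun s =>
      ((Homeomorph.addRight a).image_interior s).symm
    rw [him, him, ← Set.image_inter hinj, h4 s₁ hs₁ s₂ hs₂ hne', Set.image_empty]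

theorem stmt_17 {d : ℕ} (hd : 1 ≤ d) (P : Set (Set (EuclideanSpace ℝ (Fin d))))
    (hP : P.Finite) (hPint : ∀ τ ∈ P, (interior τ).Nonempty)
    (lam : ℝ) (hlam : 0 < lam)
    (hsep : ∀ S : Set (Set (EuclideanSpace ℝ (Fin d))), IsTiling P S →
      ∀ K : Set (EuclideanSpace ℝ (Fin d)), K.Nonempty →
        ∀ u v : EuclideanSpace ℝ (Fin d), ‖u‖ < lam → ‖v‖ < lam →
          meetsTiles (transTiling S u) K = meetsTiles (transTiling S v) K → u = v)
    (S : Set (Set (EuclideanSpace ℝ (Fin d)))) (hS : IsTiling P S)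
    (r : ℝ) (hr : 0 < r)
    (x y : EuclideanSpace ℝ (Fin d)) (hxy : ‖x - y‖ < lam) :
    tilingDr r (transTiling S x) (transTiling S y) = ENNReal.ofReal ‖x - y‖ := by
  have hne : (Metric.closedBall (0 : EuclideanSpace ℝ (Fin d)) r).Nonempty :=
    ⟨0, by simp [hr.le]⟩
  have key : transTiling (transTiling S x) (y - x) = transTiling S y := by
    rw [transTiling_transTiling]
    have h : x + (y - x) = y := by abel
    rw [h]
  apply le_antisymm
  · refine ENNReal.le_of_forall_pos_le_add fun η hη _ => ?_
    have hη' : (0:ℝ) < η := hη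
    have hpos : 0 < ‖x - y‖ + (η:ℝ) := by positivity
    have hle : tilingDr r (transTiling S x) (transTiling S y)
        ≤ ENNReal.ofReal (‖x - y‖ + η) := by
      refine iInf_le_of_le (‖x - y‖ + η) (iInf_le_of_le ?_ le_rfl)
      refine ⟨hpos, y - x, ?_, by rw [key]⟩
      rw [norm_sub_rev]
      linarith
    calc tilingDr r (transTiling S x) (transTiling S y)
        ≤ ENNReal.ofReal (‖x - y‖ + η) := hle
      _ = ENNReal.ofReal ‖x - y‖ + ENNReal.ofReal (η:ℝ) :=
          ENNReal.ofReal_add (norm_nonneg _) η.coe_nonneg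
      _ = ENNReal.ofReal ‖x - y‖ + η := by rw [ENNReal.ofReal_coe_nnreal]
  · refine le_iInf fun ε => le_iInf fun hε => ?_
    obtain ⟨hεpos, u, hu, heq⟩ := hε
    apply ENNReal.ofReal_le_ofReal
    by_cases hcase : ‖u‖ < lam
    · have huv : u = y - x := by
        refine hsep _ (isTiling_trans hS x) _ hne u (y - x) hcase ?_ ?_
        · rwa [norm_sub_rev]
        · rw [heq, key]
      rw [norm_sub_rev]
      rw [← huv]
      linarith
    · push_neg at hcase
      linarith
end
end

section
/- Let 𝒫 be a finite set of subsets of ℝ^d, each having nonempty interior, let 𝒳 denote the set of tilings of ℝ^d with prototile set 𝒫, and let λ > 0 be such that for every S ∈ 𝒳, every nonempty K ⊆ ℝ^d, and all u, v ∈ ℝ^d with |u| < λ, |v| < λ, (S+u) ⊓ K = (S+v) ⊓ K implies u = v. Let B = B(t₀, δ) be an open ball in ℝ^n and let p : B → 𝒳 be a map such that for every r' > 0 the function t ↦ d_{r'}(p(t₀), p(t)), with values in [0,∞], is continuous on B. Suppose there are r > 0 and a real ε with 0 < ε < λ/2 such that d_r(p(t₀), p(t)) < ε for all t ∈ B. Then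 d_{r'}(p(t₀), p(t)) < ε for every r' > 0 and every t ∈ B. -/
open ENNReal

noncomputable section

lemma transTiling_zero {d : ℕ} (T : Set (Set (EuclideanSpace ℝ (Fin d)))) :
    transTiling T 0 = T := by
  simp [transTiling]

lemma meetsTiles_restrict {d : ℕ} {X Y : Set (Set (EuclideanSpace ℝ (Fin d)))}
    {K K' : Set (EuclideanSpace ℝ (Fin d))} (hKK' : K ⊆ K')
    (h : meetsTiles X K' = meetsTiles Y K') :
    meetsTiles X K = meetsTiles Y K := by
  have key : ∀ Z : Set (Set (EuclideanSpace ℝ (Fin d))),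
      meetsTiles (meetsTiles Z K') K = meetsTiles Z K := by
    intro Z
    ext t
    simp only [meetsTiles, Set.mem_setOf_eq]
    constructor
    · rintro ⟨⟨hT, _⟩, h⟩; exact ⟨hT, h⟩
    · rintro ⟨hT, h⟩
      exact ⟨⟨hT, h.mono (Set.inter_subset_inter_right _ hKK')⟩, h⟩
  rw [← key X, ← key Y, h]

lemma tilingDr_le {d : ℕ} {r ε : ℝ} {T₁ T₂ : Set (Set (EuclideanSpace ℝ (Fin d)))}
    (hε : 0 < ε) (h : ∃ u : EuclideanSpace ℝ (Fin d), ‖u‖ < ε ∧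
      meetsTiles (transTiling T₁ u) (Metric.closedBall 0 r)
        = meetsTiles T₂ (Metric.closedBall 0 r)) :
    tilingDr r T₁ T₂ ≤ ENNReal.ofReal ε :=
  iInf₂_le ε ⟨hε, h⟩

lemma tilingDr_lt_iff {d : ℕ} {r c : ℝ} {T₁ T₂ : Set (Set (EuclideanSpace ℝ (Fin d)))}
    (hc : 0 < c) :
    tilingDr r T₁ T₂ < ENNReal.ofReal c ↔
      ∃ ε : ℝ, (0 < ε ∧ ∃ u : EuclideanSpace ℝ (Fin d), ‖u‖ < ε ∧
        meetsTiles (transTiling T₁ u) (Metric.closedBall 0 r)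
          = meetsTiles T₂ (Metric.closedBall 0 r)) ∧ ε < c := by
  rw [tilingDr]
  simp only [iInf_lt_iff]
  constructor
  · rintro ⟨ε, hP, hlt⟩
    exact ⟨ε, hP, (ENNReal.ofReal_lt_ofReal_iff hc).mp hlt⟩
  · rintro ⟨ε, hP, hlt⟩
    exact ⟨ε, hP, (ENNReal.ofReal_lt_ofReal_iff hc).mpr hlt⟩

theorem stmt_19 {d : ℕ} (hd : 1 ≤ d) (P : Set (Set (EuclideanSpace ℝ (Fin d))))
    (hP : P.Finite) (hPint : ∀ τ ∈ P, (interior τ).Nonempty)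
    (lam : ℝ) (hlam : 0 < lam)
    (hsep : ∀ S : Set (Set (EuclideanSpace ℝ (Fin d))), IsTiling P S →
      ∀ K : Set (EuclideanSpace ℝ (Fin d)), K.Nonempty →
        ∀ u v : EuclideanSpace ℝ (Fin d), ‖u‖ < lam → ‖v‖ < lam →
          meetsTiles (transTiling S u) K = meetsTiles (transTiling S v) K → u = v)
    {n : ℕ} (t₀ : EuclideanSpace ℝ (Fin n)) (δ : ℝ) (hδ : 0 < δ)
    (p : EuclideanSpace ℝ (Fin n) → Set (Set (EuclideanSpace ℝ (Fin d))))
    (hptile : ∀ t ∈ Metric.ball t₀ δ, IsTiling P (p t))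
    (hcont : ∀ r' : ℝ, 0 < r' →
      ContinuousOn (fun t => tilingDr r' (p t₀) (p t)) (Metric.ball t₀ δ))
    (r ε : ℝ) (hr : 0 < r) (hε : 0 < ε) (hε_lam : ε < lam / 2)
    (hbound : ∀ t ∈ Metric.ball t₀ δ, tilingDr r (p t₀) (p t) < ENNReal.ofReal ε) :
    ∀ r' : ℝ, 0 < r' → ∀ t ∈ Metric.ball t₀ δ,
      tilingDr r' (p t₀) (p t) < ENNReal.ofReal ε := by
  intro r' hr'
  have ht₀ : t₀ ∈ Metric.ball t₀ δ := Metric.mem_ball_self hδ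
  set g := fun s => tilingDr r' (p t₀) (p s) with hg
  have hself : g t₀ < ENNReal.ofReal ε := by
    refine lt_of_le_of_lt (tilingDr_le (half_pos hε) ⟨0, ?_, ?_⟩) ?_
    · simpa using half_pos hε
    · rw [transTiling_zero]
    · exact (ENNReal.ofReal_lt_ofReal_iff hε).mpr (by linarith)
  have key : ∀ t ∈ Metric.ball t₀ δ,
      g t ≤ ENNReal.ofReal (lam / 2) → g t < ENNReal.ofReal ε := by
    intro t ht hle
    have hlt : g t < ENNReal.ofReal lam :=
      lt_of_le_of_lt hle ((ENNReal.ofReal_lt_ofReal_iff hlam).mpr (by linarith))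
    obtain ⟨ε₂, ⟨hε₂pos, v, hv, hveq⟩, hε₂lt⟩ := (tilingDr_lt_iff hlam).mp hlt
    obtain ⟨ε₁, ⟨hε₁pos, u, hu, hueq⟩, hε₁lt⟩ := (tilingDr_lt_iff hε).mp (hbound t ht)
    have huv : u = v := by
      set K := Metric.closedBall (0 : EuclideanSpace ℝ (Fin d)) (min r r') with hK
      have hKne : K.Nonempty := ⟨0, Metric.mem_closedBall_self (le_min hr.le hr'.le)⟩
      have h1 : meetsTiles (transTiling (p t₀) u) K = meetsTiles (p t) K :=
        meetsTiles_restrict (Metric.closedBall_subset_closedBall (min_le_left _ _)) hueq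
      have h2 : meetsTiles (transTiling (p t₀) v) K = meetsTiles (p t) K :=
        meetsTiles_restrict (Metric.closedBall_subset_closedBall (min_le_right _ _)) hveq
      exact hsep (p t₀) (hptile t₀ ht₀) K hKne u v (by linarith) (by linarith)
        (h1.trans h2.symm)
    refine lt_of_le_of_lt (tilingDr_le hε₁pos ⟨v, ?_, hveq⟩)
      ((ENNReal.ofReal_lt_ofReal_iff hε).mpr hε₁lt)
    rw [← huv]; exact hu
  intro t ht
  by_contra hcontra
  push_neg at hcontra
  have htV : ENNReal.ofReal (lam / 2) < g t := by
    by_contra h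
    push_neg at h
    exact absurd (key t ht h) (not_lt.mpr hcontra)
  have hcg : ContinuousOn g (Metric.ball t₀ δ) := hcont r' hr'
  have hU : IsOpen (Metric.ball t₀ δ ∩ g ⁻¹' (Set.Iio (ENNReal.ofReal ε))) :=
    hcg.isOpen_inter_preimage Metric.isOpen_ball isOpen_Iio
  have hV : IsOpen (Metric.ball t₀ δ ∩ g ⁻¹' (Set.Ioi (ENNReal.ofReal (lam / 2)))) :=
    hcg.isOpen_inter_preimage Metric.isOpen_ball isOpen_Ioi
  have hcover : Metric.ball t₀ δ ⊆
      (Metric.ball t₀ δ ∩ g ⁻¹' (Set.Iio (ENNReal.ofReal ε))) ∪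
      (Metric.ball t₀ δ ∩ g ⁻¹' (Set.Ioi (ENNReal.ofReal (lam / 2)))) := by
    intro s hs
    rcases le_or_gt (g s) (ENNReal.ofReal (lam / 2)) with h | h
    · exact Or.inl ⟨hs, key s hs h⟩
    · exact Or.inr ⟨hs, h⟩
  obtain ⟨s, hsball, ⟨-, hs1⟩, ⟨-, hs2⟩⟩ :=
    (convex_ball t₀ δ).isPreconnected _ _ hU hV hcover
      ⟨t₀, ht₀, ht₀, hself⟩ ⟨t, ht, ht, htV⟩
  have : ENNReal.ofReal ε ≤ ENNReal.ofReal (lam / 2) :=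
    ENNReal.ofReal_le_ofReal hε_lam.le
  exact absurd (lt_of_le_of_lt this hs2) (not_lt.mpr hs1.le)
end
end
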